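/- Let (Ω, ℱ, P) be a probability space with ℱ a standard Borel σ-algebra, let X : Ω → ℝ^k be measurable, let D : Ω → {0,1} be measurable, and let π : ℝ^k → ℝ be a Borel measurable function such that E[D | σ(X)] = π ∘ X almost surely. Then D and X are conditionally independent given the σ-algebra σ(π ∘ X) generated by π ∘ X. -/

import Mathlib

/-!
Since `E[D | X] = π(X)` is already `σ(π(X))`-measurable, the tower property through `σ(X)` and
pulling out known factors give `E[f(D) g(X) | π(X)] = E[f(D) | π(X)] E[g(X) | π(X)]` for every
bounded `g` and every `f` for which `E[f(D) | X]` is a function of `π(X)`. As `D` is binary,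
every indicator `1{D ∈ s}` is affine in `D`, so this covers all events of `D`.
-/

open MeasureTheory ProbabilityTheory

section CondExp

variable {Ω : Type*} {m₁ m₂ mΩ : MeasurableSpace Ω} {μ : Measure Ω} [IsFiniteMeasure μ]

theorem condExp_ae_eq_of_condExp_ae_eq_of_le (h₁₂ : m₁ ≤ m₂) (h₂ : m₂ ≤ mΩ) {f φ : Ω → ℝ}
    (hφ : StronglyMeasurable[m₁] φ) (hfφ : μ[f | m₂] =ᵐ[μ] φ) : μ[f | m₁] =ᵐ[μ] φ :=
  calc μ[f | m₁] =ᵐ[μ] μ[μ[f | m₂] | m₁] := (condExp_condExp_of_le h₁₂ h₂).symm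
    _ =ᵐ[μ] μ[φ | m₁] := condExp_congr_ae hfφ
    _ = φ := condExp_of_stronglyMeasurable (h₁₂.trans h₂) hφ (integrable_condExp.congr hfφ)

theorem condExp_mul_ae_eq_of_condExp_ae_eq (h₁₂ : m₁ ≤ m₂) (h₂ : m₂ ≤ mΩ)
    {f g φ : Ω → ℝ} {C : ℝ} (hf : Integrable f μ) (hg : StronglyMeasurable[m₂] g)
    (hgC : ∀ᵐ ω ∂μ, ‖g ω‖ ≤ C) (hφ : StronglyMeasurable[m₁] φ) (hfφ : μ[f | m₂] =ᵐ[μ] φ) :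
    μ[f * g | m₁] =ᵐ[μ] φ * μ[g | m₁] := by
  have hgm : AEStronglyMeasurable g μ := (hg.mono h₂).aestronglyMeasurable
  calc μ[f * g | m₁] =ᵐ[μ] μ[μ[f * g | m₂] | m₁] := (condExp_condExp_of_le h₁₂ h₂).symm
    _ =ᵐ[μ] μ[φ * g | m₁] := condExp_congr_ae <|
        (condExp_mul_of_stronglyMeasurable_right hg (hf.mul_bdd hgm hgC) hf).trans
          (hfφ.mul .rfl)
    _ =ᵐ[μ] φ * μ[g | m₁] := condExp_mul_of_stronglyMeasurable_left hφ
        ((integrable_condExp.congr hfφ).mul_bdd hgm hgC) (.of_bound hgm C hgC)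

theorem condExp_indicator_inter_ae_eq_mul_of_condExp_ae_eq (h₁₂ : m₁ ≤ m₂) (h₂ : m₂ ≤ mΩ)
    {A B : Set Ω} {φ : Ω → ℝ} (hA : MeasurableSet A) (hB : MeasurableSet[m₂] B)
    (hφ : StronglyMeasurable[m₁] φ) (hAφ : μ⟦A | m₂⟧ =ᵐ[μ] φ) :
    μ⟦A ∩ B | m₁⟧ =ᵐ[μ] fun ω => (μ⟦A | m₁⟧) ω * (μ⟦B | m₁⟧) ω := by
  have hinter : (A ∩ B).indicator (fun _ => (1 : ℝ)) =
      A.indicator (fun _ => 1) * B.indicator (fun _ => 1) :=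
    Set.inter_indicator_one
  rw [hinter]
  filter_upwards [condExp_mul_ae_eq_of_condExp_ae_eq h₁₂ h₂ ((integrable_const 1).indicator hA)
      (stronglyMeasurable_const.indicator hB)
      (.of_forall fun _ => (norm_indicator_le_norm_self _ _).trans_eq norm_one) hφ hAφ,
    condExp_ae_eq_of_condExp_ae_eq_of_le h₁₂ h₂ hφ hAφ] with ω h₁ h₂
  rw [h₁, Pi.mul_apply, h₂]

theorem condExp_const_add_const_mul_ae_eq (hm : m₁ ≤ mΩ) (a b : ℝ) {f : Ω → ℝ}
    (hf : Integrable f μ) :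
    μ[fun ω => a + b * f ω | m₁] =ᵐ[μ] fun ω => a + b * μ[f | m₁] ω := by
  change μ[(fun _ => a) + b • f | m₁] =ᵐ[μ] (fun _ => a) + b • μ[f | m₁]
  filter_upwards [condExp_add (integrable_const a) (hf.smul b) m₁, condExp_smul b f m₁]
    with ω hadd hsmul
  rw [hadd, Pi.add_apply, condExp_const hm, Pi.add_apply, hsmul]

end CondExp

theorem indicator_preimage_eq_affine_of_mem_zero_one {Ω : Type*} {D : Ω → ℝ}
    (hD01 : ∀ ω, D ω = 0 ∨ D ω = 1) (s : Set ℝ) :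
    (D ⁻¹' s).indicator (fun _ => (1 : ℝ)) =
      fun ω => s.indicator 1 0 + (s.indicator 1 1 - s.indicator 1 0) * D ω := by
  funext ω
  change s.indicator 1 (D ω) = _
  rcases hD01 ω with hω | hω <;> simp [hω]

theorem condExp_indicator_preimage_ae_eq_of_mem_zero_one {Ω : Type*} {m mΩ : MeasurableSpace Ω}
    {μ : Measure Ω} [IsFiniteMeasure μ] (hm : m ≤ mΩ) {D : Ω → ℝ} (hD : Measurable D)
    (hD01 : ∀ ω, D ω = 0 ∨ D ω = 1) (s : Set ℝ) :
    μ⟦D ⁻¹' s | m⟧ =ᵐ[μ]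
      fun ω => s.indicator 1 0 + (s.indicator 1 1 - s.indicator 1 0) * μ[D | m] ω := by
  have hDi : Integrable D μ := .of_bound hD.aestronglyMeasurable 1 <| .of_forall fun ω => by
    rcases hD01 ω with hω | hω <;> simp [hω]
  rw [indicator_preimage_eq_affine_of_mem_zero_one hD01 s]
  exact condExp_const_add_const_mul_ae_eq hm _ _ hDi

/-- Balancing property of the propensity score (Rosenbaum–Rubin): for a binary treatment `D`
with `E[D | σ(X)] = π ∘ X` a.s., the treatment `D` and the covariates `X` are conditionally
independent given the σ-algebra generated by `π ∘ X`. -/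
theorem stmt15 {Ω : Type*} [MeasurableSpace Ω] [StandardBorelSpace Ω] [Nonempty Ω]
    (P : Measure Ω) [IsProbabilityMeasure P]
    {k : ℕ} (X : Ω → (Fin k → ℝ)) (hX : Measurable X)
    (D : Ω → ℝ) (hD : Measurable D) (hD01 : ∀ ω, D ω = 0 ∨ D ω = 1)
    (π : (Fin k → ℝ) → ℝ) (hπ : Measurable π)
    (h : P[D | MeasurableSpace.comap X inferInstance] =ᵐ[P] fun ω => π (X ω)) :
    CondIndepFun (MeasurableSpace.comap (fun ω => π (X ω)) inferInstance)
      ((hπ.comp hX).comap_le) D X P := by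
  rw [condIndepFun_iff_condExp_inter_preimage_eq_mul hD hX]
  intro s t hs ht
  set mX := MeasurableSpace.comap X inferInstance
  set mπ := MeasurableSpace.comap (fun ω => π (X ω)) inferInstance
  have hmπX : mπ ≤ mX := (hπ.comp (comap_measurable X)).comap_le
  set ψ : ℝ → ℝ := fun p => s.indicator 1 0 + (s.indicator 1 1 - s.indicator 1 0) * p
  have hψ : StronglyMeasurable[mπ] fun ω => ψ (π (X ω)) :=
    ((measurable_const.add (measurable_const.mul measurable_id)).comp
      (comap_measurable _)).stronglyMeasurable
  have hDs : P⟦D ⁻¹' s | mX⟧ =ᵐ[P] fun ω => ψ (π (X ω)) :=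
    (condExp_indicator_preimage_ae_eq_of_mem_zero_one hX.comap_le hD hD01 s).trans
      (h.fun_comp ψ)
  exact condExp_indicator_inter_ae_eq_mul_of_condExp_ae_eq hmπX hX.comap_le (hD hs) ⟨t, ht, rfl⟩
    hψ hDs
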